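/- arXiv:2305.01387 — 3 statements merged into one kernel-verified Lean document; each statement's English description precedes it below -/
import Mathlib

section
/- Let μ and ν be probability measures on a measurable space such that for every measurable set O one has μ(O) ≤ e^ε · ν(O) and ν(O) ≤ e^ε · μ(O), where ε ≥ 0. Then μ is absolutely continuous with respect to ν and for every real α > 1 the α-Rényi divergence satisfies D_α(μ‖ν) ≤ (ε²/2) · α. (In DP language: an ε-differentially private mechanism satisfies (ε²/2)-zero-concentrated differential privacy.) -/
/-!
The density `f = dμ/dν` takes values in `[e^{-ε}, e^ε]` and has `ν`-mean `1`. Since `t ↦ t^α` is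
convex, it lies below its chord on that interval, so `∫ f^α dν` is at most the `α`-th moment of
the two-point law on `{e^{-ε}, e^ε}` with mean `1`, which is `cosh (ε (α - 1/2)) / cosh (ε/2)`.
Because `tanh t ≤ t`, the function `t ↦ log (cosh t) - t²/2` is antitone on `[0, ∞)`, which bounds
this ratio by `exp (ε² α (α - 1) / 2)`; taking logarithms and dividing by `α - 1` gives `ε² α / 2`.
-/

open MeasureTheory Real Set
open scoped ENNReal

/-- The `α`-Rényi divergence `D_α(μ‖ν) = (1/(α−1)) · log ∫ (dμ/dν)^α dν`. -/
noncomputable def renyiDiv {X : Type*} [MeasurableSpace X]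
    (μ ν : Measure X) (α : ℝ) : ℝ :=
  (α - 1)⁻¹ * Real.log (∫ x, (μ.rnDeriv ν x).toReal ^ α ∂ν)

namespace Real

theorem sinh_le_mul_cosh {t : ℝ} (ht : 0 ≤ t) : sinh t ≤ t * cosh t := by
  have hmono : MonotoneOn (fun t ↦ t * cosh t - sinh t) (Ici 0) := by
    refine monotoneOn_of_deriv_nonneg (convex_Ici 0) (by fun_prop) (by fun_prop) fun x hx ↦ ?_
    have hd : HasDerivAt (fun t ↦ t * cosh t - sinh t) (1 * cosh x + x * sinh x - cosh x) x :=
      ((hasDerivAt_id x).mul (hasDerivAt_cosh x)).sub (hasDerivAt_sinh x)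
    rw [interior_Ici] at hx
    rw [hd.deriv, one_mul, add_sub_cancel_left]
    exact mul_nonneg hx.le (sinh_nonneg_iff.2 hx.le)
  simpa using hmono self_mem_Ici ht ht

theorem cosh_le_cosh_mul_exp {u v : ℝ} (hv : 0 ≤ v) (hvu : v ≤ u) :
    cosh u ≤ cosh v * exp (u ^ 2 / 2 - v ^ 2 / 2) := by
  have hd (x : ℝ) : HasDerivAt (fun t ↦ log (cosh t) - t ^ 2 / 2) (sinh x / cosh x - x) x := by
    refine (((hasDerivAt_cosh x).log (cosh_pos x).ne').sub
      ((hasDerivAt_pow 2 x).div_const 2)).congr_deriv ?_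
    norm_num
  have hanti : AntitoneOn (fun t ↦ log (cosh t) - t ^ 2 / 2) (Ici 0) := by
    refine antitoneOn_of_deriv_nonpos (convex_Ici 0)
      (fun x _ ↦ (hd x).continuousAt.continuousWithinAt)
      (fun x _ ↦ (hd x).differentiableAt.differentiableWithinAt) fun x hx ↦ ?_
    rw [interior_Ici] at hx
    rw [(hd x).deriv, sub_nonpos, div_le_iff₀ (cosh_pos x)]
    exact sinh_le_mul_cosh hx.le
  have hlog := hanti hv (hv.trans hvu) hvu
  dsimp only at hlog
  rw [← exp_log (cosh_pos u), ← exp_log (cosh_pos v), ← exp_add]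
  exact exp_le_exp.2 (by linarith)

theorem exp_chord_eq_cosh_div_cosh {ε : ℝ} (hε : ε ≠ 0) (p : ℝ) :
    ((exp ε - 1) * exp (-ε) ^ p + (1 - exp (-ε)) * exp ε ^ p) / (exp ε - exp (-ε)) =
      cosh (ε * p - ε / 2) / cosh (ε / 2) := by
  have hden : exp ε - exp (-ε) ≠ 0 := by
    rw [sub_ne_zero, Ne, exp_eq_exp]
    contrapose! hε
    linarith
  have hsq : exp ε = exp (ε / 2) ^ 2 := by rw [← exp_nat_mul]; ring_nf
  rw [div_eq_div_iff hden (cosh_pos _).ne', cosh_eq, cosh_eq, ← exp_mul, ← exp_mul, neg_mul,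
    exp_neg (ε * p), exp_neg ε, exp_neg (ε * p - ε / 2), exp_neg (ε / 2), exp_sub, hsq]
  field_simp
  ring

theorem exp_chord_le_exp {ε p : ℝ} (hε : 0 < ε) (hp : 1 ≤ p) :
    ((exp ε - 1) * exp (-ε) ^ p + (1 - exp (-ε)) * exp ε ^ p) / (exp ε - exp (-ε)) ≤
      exp (ε ^ 2 * p * (p - 1) / 2) := by
  rw [exp_chord_eq_cosh_div_cosh hε.ne', div_le_iff₀ (cosh_pos _)]
  calc cosh (ε * p - ε / 2) ≤ cosh (ε / 2) * exp ((ε * p - ε / 2) ^ 2 / 2 - (ε / 2) ^ 2 / 2) :=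
        cosh_le_cosh_mul_exp (by positivity) (by nlinarith)
    _ = exp (ε ^ 2 * p * (p - 1) / 2) * cosh (ε / 2) := by
        rw [mul_comm]; congr 2; ring

end Real

namespace ConvexOn

variable {s : Set ℝ} {φ : ℝ → ℝ} {a b : ℝ}

theorem mul_le_chord (hφ : ConvexOn ℝ s φ) (ha : a ∈ s) (hb : b ∈ s) {t : ℝ}
    (ht : t ∈ Icc a b) : (b - a) * φ t ≤ (b - t) * φ a + (t - a) * φ b := by
  rcases ht.1.eq_or_lt with rfl | hat
  · simp
  rcases ht.2.eq_or_lt with rfl | htb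
  · simp
  exact hφ.secant_mono_aux1 ha hb hat htb

theorem mul_integral_comp_le_chord {X : Type*} [MeasurableSpace X] {ν : Measure X}
    [IsProbabilityMeasure ν] (hφ : ConvexOn ℝ s φ) (ha : a ∈ s) (hb : b ∈ s) {f : X → ℝ}
    (hf : ∀ᵐ x ∂ν, f x ∈ Icc a b) (hfi : Integrable f ν)
    (hφfi : Integrable (fun x ↦ φ (f x)) ν) :
    (b - a) * ∫ x, φ (f x) ∂ν ≤ (b - ∫ x, f x ∂ν) * φ a + (∫ x, f x ∂ν - a) * φ b := by
  calc (b - a) * ∫ x, φ (f x) ∂ν = ∫ x, (b - a) * φ (f x) ∂ν := (integral_const_mul _ _).symm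
    _ ≤ ∫ x, (b - f x) * φ a + (f x - a) * φ b ∂ν :=
      integral_mono_ae (hφfi.const_mul _) (by fun_prop)
        (hf.mono fun x hx ↦ hφ.mul_le_chord ha hb hx)
    _ = (b - ∫ x, f x ∂ν) * φ a + (∫ x, f x ∂ν - a) * φ b := by
      rw [integral_add (by fun_prop) (by fun_prop), integral_mul_const, integral_mul_const,
        integral_sub (by fun_prop) hfi, integral_sub hfi (by fun_prop)]
      simp

end ConvexOn

namespace MeasureTheory.Measure

variable {X : Type*} [MeasurableSpace X] {μ ν : Measure X} {c : ℝ≥0∞}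

theorem inv_smul_le_of_le_smul (hc0 : c ≠ 0) (hc : c ≠ ∞) (h : ν ≤ c • μ) : c⁻¹ • ν ≤ μ :=
  calc c⁻¹ • ν ≤ c⁻¹ • c • μ := by gcongr
    _ = μ := by rw [smul_smul, ENNReal.inv_mul_cancel hc0 hc, one_smul]

theorem rnDeriv_le_of_le_smul [SigmaFinite ν] (h : μ ≤ c • ν) :
    μ.rnDeriv ν ≤ᵐ[ν] fun _ ↦ c :=
  ae_le_of_forall_setLIntegral_le_of_sigmaFinite (μ.measurable_rnDeriv ν) fun s _ _ ↦ by
    rw [setLIntegral_const]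
    exact (setLIntegral_rnDeriv_le s).trans (h s)

theorem le_rnDeriv_of_smul_le [SigmaFinite ν] [HaveLebesgueDecomposition μ ν] (hμν : μ ≪ ν)
    (h : c • ν ≤ μ) : (fun _ ↦ c) ≤ᵐ[ν] μ.rnDeriv ν :=
  ae_le_of_forall_setLIntegral_le_of_sigmaFinite measurable_const fun s hs _ ↦ by
    rw [setLIntegral_const, setLIntegral_rnDeriv' hμν hs]
    exact h s

theorem rnDeriv_toReal_mem_Icc_of_le_exp_smul [SigmaFinite μ] [SigmaFinite ν] {ε : ℝ}
    (hμν : μ ≤ ENNReal.ofReal (exp ε) • ν) (hνμ : ν ≤ ENNReal.ofReal (exp ε) • μ) :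
    ∀ᵐ x ∂ν, (μ.rnDeriv ν x).toReal ∈ Icc (exp (-ε)) (exp ε) := by
  have hinv : (ENNReal.ofReal (exp ε))⁻¹ = ENNReal.ofReal (exp (-ε)) := by
    rw [exp_neg, ENNReal.ofReal_inv_of_pos (exp_pos ε)]
  have hlow := le_rnDeriv_of_smul_le (absolutelyContinuous_of_le_smul hμν) <|
    hinv ▸ inv_smul_le_of_le_smul (ENNReal.ofReal_pos.2 (exp_pos ε)).ne' ENNReal.ofReal_ne_top hνμ
  filter_upwards [rnDeriv_le_of_le_smul hμν, hlow, rnDeriv_lt_top μ ν] with x hhi hlo htop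
  exact ⟨(ENNReal.ofReal_le_iff_le_toReal htop.ne).1 hlo,
    ENNReal.toReal_le_of_le_ofReal (exp_pos ε).le hhi⟩

end MeasureTheory.Measure

theorem log_integral_rpow_le_of_mem_Icc_exp {X : Type*} [MeasurableSpace X] {ν : Measure X}
    [IsProbabilityMeasure ν] {f : X → ℝ} {ε α : ℝ} (hε : 0 ≤ ε) (hα : 1 ≤ α)
    (hfm : AEMeasurable f ν) (hf : ∀ᵐ x ∂ν, f x ∈ Icc (exp (-ε)) (exp ε))
    (hmean : ∫ x, f x ∂ν = 1) :
    log (∫ x, f x ^ α ∂ν) ≤ ε ^ 2 * α * (α - 1) / 2 := by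
  have hfα : ∀ᵐ x ∂ν, f x ^ α ∈ Icc (exp (-ε) ^ α) (exp ε ^ α) := hf.mono fun x hx ↦
    ⟨rpow_le_rpow (exp_pos _).le hx.1 (by linarith),
      rpow_le_rpow ((exp_pos _).le.trans hx.1) hx.2 (by linarith)⟩
  have hfαi : Integrable (fun x ↦ f x ^ α) ν := .of_mem_Icc _ _ (hfm.pow_const α) hfα
  have hpos : 0 < ∫ x, f x ^ α ∂ν := (rpow_pos_of_pos (exp_pos (-ε)) α).trans_le <| by
    simpa using integral_mono_ae (integrable_const _) hfαi (hfα.mono fun x hx ↦ hx.1)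
  rw [log_le_iff_le_exp hpos]
  rcases hε.eq_or_lt with rfl | hε
  · have hf1 : (fun x ↦ f x ^ α) =ᵐ[ν] fun _ ↦ 1 := hf.mono fun x hx ↦ by
      simp only [neg_zero, exp_zero, Icc_self, mem_singleton_iff] at hx
      simp [hx]
    simp [integral_congr_ae hf1]
  · have hchord := (convexOn_rpow hα).mul_integral_comp_le_chord (mem_Ici.2 (exp_pos (-ε)).le)
      (mem_Ici.2 (exp_pos ε).le) hf (.of_mem_Icc _ _ hfm hf) hfαi
    rw [hmean] at hchord
    have hAB : 0 < exp ε - exp (-ε) := sub_pos.2 (exp_lt_exp.2 (by linarith))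
    exact ((le_div_iff₀' hAB).2 hchord).trans (exp_chord_le_exp hε hα)

/-- If `μ` and `ν` satisfy the two-sided `ε`-DP inequality, then `μ ≪ ν` and
`D_α(μ‖ν) ≤ (ε²/2)·α` for all `α > 1` (i.e. `ε`-DP implies `(ε²/2)`-zCDP). -/
theorem dp_implies_zcdp {X : Type*} [MeasurableSpace X]
    (μ ν : Measure X) [IsProbabilityMeasure μ] [IsProbabilityMeasure ν]
    (ε : ℝ) (hε : 0 ≤ ε)
    (h1 : ∀ O : Set X, MeasurableSet O → μ O ≤ ENNReal.ofReal (Real.exp ε) * ν O)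
    (h2 : ∀ O : Set X, MeasurableSet O → ν O ≤ ENNReal.ofReal (Real.exp ε) * μ O) :
    μ ≪ ν ∧ ∀ α : ℝ, 1 < α → renyiDiv μ ν α ≤ ε ^ 2 / 2 * α := by
  have hμν : μ ≤ ENNReal.ofReal (exp ε) • ν := Measure.le_iff.2 h1
  have hνμ : ν ≤ ENNReal.ofReal (exp ε) • μ := Measure.le_iff.2 h2
  have hac := Measure.absolutelyContinuous_of_le_smul hμν
  refine ⟨hac, fun α hα ↦ ?_⟩
  have hlog := log_integral_rpow_le_of_mem_Icc_exp hε hα.le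
    (Measure.measurable_rnDeriv μ ν).ennreal_toReal.aemeasurable
    (Measure.rnDeriv_toReal_mem_Icc_of_le_exp_smul hμν hνμ)
    (by rw [Measure.integral_toReal_rnDeriv hac, probReal_univ])
  have hα1 : 0 < α - 1 := sub_pos.2 hα
  calc renyiDiv μ ν α ≤ (α - 1)⁻¹ * (ε ^ 2 * α * (α - 1) / 2) := by
        rw [renyiDiv]; gcongr
    _ = ε ^ 2 / 2 * α := by field_simp
end

section
/- Let μ and ν be probability measures on a measurable space such that for every measurable set O one has μ(O) ≤ e^ε · ν(O) and ν(O) ≤ e^ε · μ(O), where ε ≥ 0. Then the Kullback–Leibler divergence satisfies KL(μ‖ν) = ∫ log(dμ/dν) dμ ≤ ε²/2. -/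
/-!
Write `f = log (dμ/dν)`. The two-sided bound gives `-ε ≤ f ≤ ε` `μ`-a.e., and mutual absolute
continuity gives `∫ e^{-f} dμ = ∫ dν/dμ dμ = 1`, i.e. the cumulant generating function of `f`
under `μ` vanishes at `-1`. Hoeffding's lemma for a variable with range of length `2ε` bounds
that cumulant by `-∫ f dμ + (2ε)²/8`, so `∫ f dμ ≤ ε²/2`.
-/

open MeasureTheory ProbabilityTheory Real
open scoped ENNReal

namespace ProbabilityTheory

/-- **Hoeffding's lemma** in cumulant form. -/
lemma cgf_le_mul_integral_add_of_mem_Icc {Ω : Type*} [MeasurableSpace Ω] {μ : Measure Ω}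
    [IsProbabilityMeasure μ] {X : Ω → ℝ} {a b : ℝ} (hm : AEMeasurable X μ)
    (hb : ∀ᵐ ω ∂μ, X ω ∈ Set.Icc a b) (t : ℝ) :
    cgf X μ t ≤ t * μ[X] + (b - a) ^ 2 * t ^ 2 / 8 := by
  have hcentered := (hasSubgaussianMGF_of_mem_Icc hm hb).cgf_le t
  have hpos : 0 < mgf X μ t := mgf_pos (integrable_exp_mul_of_mem_Icc hm hb)
  have hshift : cgf (fun ω ↦ X ω - μ[X]) μ t = cgf X μ t - t * μ[X] := by
    simp only [cgf, sub_eq_add_neg, mgf_add_const, log_mul hpos.ne' (exp_pos _).ne', log_exp]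
    ring
  rw [hshift] at hcentered
  have hconst : ((‖b - a‖₊ / 2) ^ 2 : NNReal) * t ^ 2 / 2 = (b - a) ^ 2 * t ^ 2 / 8 := by
    push_cast
    rw [norm_eq_abs, div_pow, sq_abs]
    ring
  linarith

end ProbabilityTheory

namespace MeasureTheory

variable {X : Type*} [MeasurableSpace X] {μ ν : Measure X}

lemma Measure.absolutelyContinuous_of_forall_le_mul {c : ℝ≥0∞}
    (h : ∀ s, MeasurableSet s → μ s ≤ c * ν s) : μ ≪ ν :=
  Measure.AbsolutelyContinuous.mk fun s hs hνs ↦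
    le_antisymm ((h s hs).trans_eq (by rw [hνs, mul_zero])) zero_le

lemma Measure.rnDeriv_le_of_forall_le_mul [SigmaFinite ν] {c : ℝ≥0∞}
    (h : ∀ s, MeasurableSet s → μ s ≤ c * ν s) : μ.rnDeriv ν ≤ᵐ[ν] fun _ ↦ c := by
  refine ae_le_of_forall_setLIntegral_le_of_sigmaFinite (μ.measurable_rnDeriv ν)
    fun s hs _ ↦ ?_
  calc ∫⁻ x in s, μ.rnDeriv ν x ∂ν ≤ μ s := Measure.setLIntegral_rnDeriv_le s
    _ ≤ c * ν s := h s hs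
    _ = ∫⁻ _ in s, c ∂ν := by rw [setLIntegral_const, mul_comm]

lemma llr_le_of_forall_le_mul [SigmaFinite μ] [SigmaFinite ν] {ε : ℝ}
    (h : ∀ s, MeasurableSet s → μ s ≤ ENNReal.ofReal (exp ε) * ν s) :
    ∀ᵐ x ∂μ, llr μ ν x ≤ ε := by
  have hμν := Measure.absolutelyContinuous_of_forall_le_mul h
  filter_upwards [hμν.ae_le (Measure.rnDeriv_le_of_forall_le_mul h), Measure.rnDeriv_pos hμν,
    hμν.ae_le (μ.rnDeriv_lt_top ν)] with x hle hpos hlt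
  rw [llr, log_le_iff_le_exp (ENNReal.toReal_pos hpos.ne' hlt.ne)]
  exact ENNReal.toReal_le_of_le_ofReal (exp_pos ε).le hle

lemma llr_mem_Icc_of_forall_le_mul [SigmaFinite μ] [SigmaFinite ν] {ε : ℝ}
    (h₁ : ∀ s, MeasurableSet s → μ s ≤ ENNReal.ofReal (exp ε) * ν s)
    (h₂ : ∀ s, MeasurableSet s → ν s ≤ ENNReal.ofReal (exp ε) * μ s) :
    ∀ᵐ x ∂μ, llr μ ν x ∈ Set.Icc (-ε) ε := by
  have hμν := Measure.absolutelyContinuous_of_forall_le_mul h₁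
  filter_upwards [llr_le_of_forall_le_mul h₁, hμν.ae_le (llr_le_of_forall_le_mul h₂),
    neg_llr hμν] with x hupper hlower hneg
  rw [Pi.neg_apply] at hneg
  exact ⟨by linarith, hupper⟩

lemma mgf_llr_neg_one [SigmaFinite μ] [SigmaFinite ν] (hμν : μ ≪ ν) (hνμ : ν ≪ μ) :
    mgf (llr μ ν) μ (-1) = ν.real Set.univ := by
  rw [mgf, ← Measure.integral_toReal_rnDeriv hνμ]
  refine integral_congr_ae ?_
  filter_upwards [exp_neg_llr hμν] with x hx
  simpa using hx

end MeasureTheory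

theorem dp_implies_kl_le_general {X : Type*} [MeasurableSpace X]
    (μ ν : Measure X) [IsProbabilityMeasure μ] [IsProbabilityMeasure ν]
    (ε : ℝ)
    (h1 : ∀ O : Set X, MeasurableSet O → μ O ≤ ENNReal.ofReal (Real.exp ε) * ν O)
    (h2 : ∀ O : Set X, MeasurableSet O → ν O ≤ ENNReal.ofReal (Real.exp ε) * μ O) :
    ∫ x, Real.log ((μ.rnDeriv ν x).toReal) ∂μ ≤ ε ^ 2 / 2 := by
  have hμν := Measure.absolutelyContinuous_of_forall_le_mul h1
  have hνμ := Measure.absolutelyContinuous_of_forall_le_mul h2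
  have hoeffding := cgf_le_mul_integral_add_of_mem_Icc
    (measurable_llr μ ν).aemeasurable (llr_mem_Icc_of_forall_le_mul h1 h2) (-1)
  rw [cgf, mgf_llr_neg_one hμν hνμ, probReal_univ, log_one] at hoeffding
  change ∫ x, llr μ ν x ∂μ ≤ ε ^ 2 / 2
  linarith

/-- If `μ` and `ν` satisfy the two-sided `ε`-DP inequality, then the
Kullback–Leibler divergence `KL(μ‖ν) = ∫ log(dμ/dν) dμ` is at most `ε²/2`. -/
theorem dp_implies_kl_le {X : Type*} [MeasurableSpace X]
    (μ ν : Measure X) [IsProbabilityMeasure μ] [IsProbabilityMeasure ν]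
    (ε : ℝ) (hε : 0 ≤ ε)
    (h1 : ∀ O : Set X, MeasurableSet O → μ O ≤ ENNReal.ofReal (Real.exp ε) * ν O)
    (h2 : ∀ O : Set X, MeasurableSet O → ν O ≤ ENNReal.ofReal (Real.exp ε) * μ O) :
    ∫ x, Real.log ((μ.rnDeriv ν x).toReal) ∂μ ≤ ε ^ 2 / 2 :=
  dp_implies_kl_le_general μ ν ε h1 h2
end

section
/- Let σ > 0 and m₁, m₂ ∈ ℝ. Then for every real α > 1, the α-Rényi divergence between the real Gaussian measures with means m₁ and m₂ and common variance σ² satisfies D_α(N(m₁, σ²) ‖ N(m₂, σ²)) = α·(m₁ − m₂)²/(2σ²); equivalently, ∫ (dN(m₁,σ²)/dN(m₂,σ²))^α dN(m₂,σ²) = exp(α(α−1)(m₁ − m₂)²/(2σ²)). -/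
/-!
The likelihood ratio of two Gaussians with the same variance `v` is the exponential of an affine
function of `x`. Multiplying its `α`-th power by the density of `N(m₂, v)` and completing the
square gives `exp (α (α - 1) (m₁ - m₂)² / (2v))` times the density of `N(m₂ + α (m₁ - m₂), v)`,
which integrates to `1`.
-/

open MeasureTheory ProbabilityTheory

open Real
open scoped NNReal

namespace ProbabilityTheory

variable (m₁ m₂ : ℝ) {v : ℝ≥0}

lemma gaussianReal_eq_withDensity_gaussianReal (hv : v ≠ 0) :
    gaussianReal m₁ v = (gaussianReal m₂ v).withDensity
      fun x ↦ ENNReal.ofReal (gaussianPDFReal m₁ v x / gaussianPDFReal m₂ v x) := by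
  rw [gaussianReal_of_var_ne_zero _ hv, gaussianReal_of_var_ne_zero _ hv,
    ← withDensity_mul _ (measurable_gaussianPDF m₂ v) (by fun_prop)]
  congr 1
  ext x
  have hpos : 0 < gaussianPDFReal m₂ v x := gaussianPDFReal_pos _ _ _ hv
  simp only [Pi.mul_apply, gaussianPDF]
  rw [← ENNReal.ofReal_mul hpos.le, mul_div_cancel₀ _ hpos.ne']

lemma rnDeriv_gaussianReal_gaussianReal (hv : v ≠ 0) :
    (gaussianReal m₁ v).rnDeriv (gaussianReal m₂ v) =ᵐ[gaussianReal m₂ v]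
      fun x ↦ ENNReal.ofReal (gaussianPDFReal m₁ v x / gaussianPDFReal m₂ v x) := by
  rw [gaussianReal_eq_withDensity_gaussianReal m₁ m₂ hv]
  exact Measure.rnDeriv_withDensity _ (by fun_prop)

lemma gaussianPDFReal_div_gaussianPDFReal (x : ℝ) (hv : v ≠ 0) :
    gaussianPDFReal m₁ v x / gaussianPDFReal m₂ v x
      = exp (((x - m₂) ^ 2 - (x - m₁) ^ 2) / (2 * v)) := by
  have hc : (√(2 * π * v))⁻¹ ≠ 0 := by positivity
  rw [gaussianPDFReal, gaussianPDFReal, mul_div_mul_left _ _ hc, ← exp_sub]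
  ring_nf

lemma gaussianPDFReal_mul_div_gaussianPDFReal_rpow (α x : ℝ) (hv : v ≠ 0) :
    gaussianPDFReal m₂ v x * (gaussianPDFReal m₁ v x / gaussianPDFReal m₂ v x) ^ α
      = exp (α * (α - 1) * (m₁ - m₂) ^ 2 / (2 * v)) * gaussianPDFReal (m₂ + α * (m₁ - m₂)) v x := by
  have hv' : (2 * v : ℝ) ≠ 0 := by positivity
  rw [gaussianPDFReal_div_gaussianPDFReal m₁ m₂ x hv, ← exp_mul, gaussianPDFReal,
    gaussianPDFReal, mul_left_comm, mul_assoc, ← exp_add, ← exp_add]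
  congr 2
  field_simp
  ring

lemma integral_rnDeriv_gaussianReal_rpow (α : ℝ) (hv : v ≠ 0) :
    ∫ x, ((gaussianReal m₁ v).rnDeriv (gaussianReal m₂ v) x).toReal ^ α ∂gaussianReal m₂ v
      = exp (α * (α - 1) * (m₁ - m₂) ^ 2 / (2 * v)) := calc
  _ = ∫ x, gaussianPDFReal m₂ v x * (gaussianPDFReal m₁ v x / gaussianPDFReal m₂ v x) ^ α := by
    rw [integral_congr_ae <| (rnDeriv_gaussianReal_gaussianReal m₁ m₂ hv).mono fun x hx ↦ by
      rw [hx], integral_gaussianReal_eq_integral_smul hv]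
    simp only [smul_eq_mul, ENNReal.toReal_ofReal
      (div_nonneg (gaussianPDFReal_nonneg _ _ _) (gaussianPDFReal_nonneg _ _ _))]
  _ = exp (α * (α - 1) * (m₁ - m₂) ^ 2 / (2 * v)) := by
    simp_rw [gaussianPDFReal_mul_div_gaussianPDFReal_rpow m₁ m₂ α _ hv]
    rw [integral_const_mul, integral_gaussianPDFReal_eq_one _ hv, mul_one]

end ProbabilityTheory

lemma renyiDiv_eq_of_integral_eq_exp {X : Type*} [MeasurableSpace X] {μ ν : Measure X}
    {α c : ℝ} (h : ∫ x, (μ.rnDeriv ν x).toReal ^ α ∂ν = exp c) :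
    renyiDiv μ ν α = c / (α - 1) := by
  rw [renyiDiv, h, log_exp, inv_mul_eq_div]

/-- Rényi divergence between two real Gaussians with the same variance `σ²`:
`D_α(N(m₁, σ²) ‖ N(m₂, σ²)) = α·(m₁ − m₂)²/(2σ²)`, equivalently
`∫ (dN(m₁,σ²)/dN(m₂,σ²))^α dN(m₂,σ²) = exp(α(α−1)(m₁ − m₂)²/(2σ²))`. -/
theorem renyiDiv_gaussian (σ : ℝ) (hσ : 0 < σ) (m₁ m₂ : ℝ) :
    ∀ α : ℝ, 1 < α →
      renyiDiv (gaussianReal m₁ ⟨σ ^ 2, sq_nonneg σ⟩) (gaussianReal m₂ ⟨σ ^ 2, sq_nonneg σ⟩) α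
          = α * (m₁ - m₂) ^ 2 / (2 * σ ^ 2) ∧
      ∫ x, ((gaussianReal m₁ ⟨σ ^ 2, sq_nonneg σ⟩).rnDeriv
              (gaussianReal m₂ ⟨σ ^ 2, sq_nonneg σ⟩) x).toReal ^ α
          ∂(gaussianReal m₂ ⟨σ ^ 2, sq_nonneg σ⟩)
        = Real.exp (α * (α - 1) * (m₁ - m₂) ^ 2 / (2 * σ ^ 2)) := by
  intro α hα
  set v : ℝ≥0 := ⟨σ ^ 2, sq_nonneg σ⟩
  have hvσ : (v : ℝ) = σ ^ 2 := rfl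
  have hv : v ≠ 0 := NNReal.coe_ne_zero.mp (hvσ ▸ (pow_pos hσ 2).ne')
  have hint := integral_rnDeriv_gaussianReal_rpow m₁ m₂ α hv
  refine ⟨?_, hint⟩
  rw [renyiDiv_eq_of_integral_eq_exp hint, hvσ]
  field_simp [(sub_pos.mpr hα).ne']
end
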